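/- arXiv:2104.00753 — 7 statements merged into one kernel-verified Lean document; each statement's English description precedes it below -/
import Mathlib

section
/- For every t ≥ 0, the matrix exp(−t e^{(p)}_{(j,j)}) = I + ((e^{−t(1+r_j)} − 1)/(1+r_j)) e^{(p)}_{(j,j)} is a (row-)stochastic matrix: all its entries are nonnegative and every row sums to 1; moreover it leaves p invariant: p · exp(−t e^{(p)}_{(j,j)}) = p. -/
open Matrix

/-- `r_j := p_j / p_n`, with `n = m+1` and last index `Fin.last m`. -/
noncomputable def rRatio (m : ℕ) (p : Fin (m + 1) → ℝ) (j : Fin m) : ℝ :=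
  p j.castSucc / p (Fin.last m)

/-- `e^{(p)}_{(j,k)} := (e_j - r_j e_n)(e_k^T - e_n^T)` for `j, k ∈ [n-1]`. -/
noncomputable def epBasis (m : ℕ) (p : Fin (m + 1) → ℝ) (j k : Fin m) :
    Matrix (Fin (m + 1)) (Fin (m + 1)) ℝ :=
  Matrix.vecMulVec
    (fun a => (if a = j.castSucc then 1 else 0) -
      rRatio m p j * (if a = Fin.last m then 1 else 0))
    (fun b => (if b = k.castSucc then 1 else 0) - (if b = Fin.last m then 1 else 0))

/-!
Write `e := e^{(p)}_{(j,j)} = u vᵀ` with `u = e_j - r_j e_n`, `v = e_j - e_n`. Then `vᵀu = 1 + r_j`,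
so `e / (1 + r_j)` is idempotent and the exponential series collapses to `I + g e` with
`-1 ≤ g (1 + r_j) ≤ 0`. As `-e` has nonnegative off-diagonal entries and diagonal entries in
`[0, 1 + r_j]`, `I + g e` is entrywise nonnegative; its rows sum to `1` because `vᵀ1 = 0`, and it
fixes `p` because `p u = 0`.
-/

open NormedSpace

lemma IsIdempotentElem.exp_smul {A : Type*} [NormedRing A] [NormedAlgebra ℝ A] [CompleteSpace A]
    {P : A} (hP : IsIdempotentElem P) (x : ℝ) :
    exp (x • P) = 1 + (Real.exp x - 1) • P := by
  have hterm : ∀ n : ℕ, (n.factorial⁻¹ : ℝ) • (x • P) ^ n =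
      (if n = 0 then 1 - P else 0) + (x ^ n / n.factorial) • P := by
    rintro (_ | n)
    · simp
    · rw [smul_pow, hP.pow_succ_eq, smul_smul, if_neg n.succ_ne_zero, zero_add, inv_mul_eq_div]
  have hsum : HasSum (fun n : ℕ => (n.factorial⁻¹ : ℝ) • (x • P) ^ n)
      (1 - P + Real.exp x • P) := by
    simp only [hterm]
    refine (hasSum_ite_eq 0 (1 - P)).add (HasSum.smul_const ?_ P)
    rw [Real.exp_eq_exp_ℝ]
    exact expSeries_div_hasSum_exp x
  rw [(exp_series_hasSum_exp' (x • P)).unique hsum, sub_smul, one_smul]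
  abel

lemma exp_smul_of_mul_self_eq_smul {A : Type*} [NormedRing A] [NormedAlgebra ℝ A]
    [CompleteSpace A] {Q : A} {c : ℝ} (hc : c ≠ 0) (hQ : Q * Q = c • Q) (x : ℝ) :
    exp (x • Q) = 1 + ((Real.exp (x * c) - 1) / c) • Q := by
  have hP : IsIdempotentElem (c⁻¹ • Q) := by
    rw [IsIdempotentElem, smul_mul_smul_comm, hQ, smul_smul, mul_assoc, inv_mul_cancel₀ hc,
      mul_one]
  have hx : x • Q = (x * c) • (c⁻¹ • Q) := by
    rw [smul_smul, mul_assoc, mul_inv_cancel₀ hc, mul_one]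
  rw [hx, hP.exp_smul, smul_smul, div_eq_mul_inv]

namespace Matrix

variable {n : Type*} [DecidableEq n]

lemma one_add_smul_apply_nonneg {E : Matrix n n ℝ} {g c : ℝ}
    (hoff : ∀ a b, a ≠ b → E a b ≤ 0) (hdiag : ∀ a, E a a ∈ Set.Icc 0 c)
    (hg : g ≤ 0) (hgc : 0 ≤ 1 + g * c) (a b : n) : 0 ≤ (1 + g • E) a b := by
  rw [add_apply, smul_apply, smul_eq_mul]
  rcases eq_or_ne a b with rfl | hab
  · obtain ⟨h0, hle⟩ := hdiag a
    rw [one_apply_eq]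
    nlinarith
  · rw [one_apply_ne hab, zero_add]
    exact mul_nonneg_of_nonpos_of_nonpos hg (hoff a b hab)

variable [Fintype n]

lemma exp_smul_vecMulVec (u v : n → ℝ) (hvu : v ⬝ᵥ u ≠ 0) (x : ℝ) :
    exp (x • vecMulVec u v) =
      1 + ((Real.exp (x * (v ⬝ᵥ u)) - 1) / (v ⬝ᵥ u)) • vecMulVec u v := by
  open scoped Norms.Operator in
  refine exp_smul_of_mul_self_eq_smul hvu ?_ x
  rw [vecMulVec_mul_vecMulVec, vecMulVec_smul]

lemma sum_one_add_smul_vecMulVec_apply {u v : n → ℝ} (hv : v ⬝ᵥ 1 = 0) (g : ℝ) (a : n) :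
    ∑ b, (1 + g • vecMulVec u v) a b = 1 := by
  rw [dotProduct_one] at hv
  simp only [add_apply, smul_apply, vecMulVec_apply, smul_eq_mul, Finset.sum_add_distrib,
    ← Finset.mul_sum, hv, one_apply, Finset.sum_ite_eq, Finset.mem_univ, if_true]
  ring

lemma vecMul_one_add_smul_vecMulVec {u v w : n → ℝ} (h : w ⬝ᵥ u = 0) (g : ℝ) :
    w ᵥ* (1 + g • vecMulVec u v) = w := by
  rw [vecMul_add, vecMul_one, vecMul_smul, vecMul_vecMulVec, h, zero_smul, smul_zero, add_zero]

end Matrix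

section

variable {m : ℕ} (p : Fin (m + 1) → ℝ) (j : Fin m)

noncomputable def epLeft : Fin (m + 1) → ℝ :=
  Pi.single j.castSucc 1 - rRatio m p j • Pi.single (Fin.last m) 1

noncomputable def epRight (k : Fin m) : Fin (m + 1) → ℝ :=
  Pi.single k.castSucc 1 - Pi.single (Fin.last m) 1

lemma epBasis_eq_vecMulVec (k : Fin m) : epBasis m p j k = vecMulVec (epLeft p j) (epRight k) := by
  ext a b
  simp only [epBasis, epLeft, epRight, vecMulVec_apply, Pi.sub_apply, Pi.smul_apply,
    Pi.single_apply, smul_eq_mul]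

lemma epRight_dotProduct_epLeft : epRight j ⬝ᵥ epLeft p j = 1 + rRatio m p j := by
  simp [epLeft, epRight, dotProduct_sub, (Fin.castSucc_lt_last j).ne, (Fin.castSucc_lt_last j).ne']

lemma epRight_dotProduct_one (k : Fin m) : epRight k ⬝ᵥ (1 : Fin (m + 1) → ℝ) = 0 := by
  simp [epRight, sub_dotProduct]

variable {p j}

lemma dotProduct_epLeft (hp : p (Fin.last m) ≠ 0) : p ⬝ᵥ epLeft p j = 0 := by
  simp [epLeft, dotProduct_sub, rRatio, hp]

lemma epBasis_apply_nonpos_of_ne (hr : 0 ≤ rRatio m p j) {a b : Fin (m + 1)} (hab : a ≠ b) :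
    epBasis m p j j a b ≤ 0 := by
  have := (Fin.castSucc_lt_last j).ne
  simp only [epBasis, vecMulVec_apply]
  split_ifs <;> simp_all

lemma epBasis_apply_self_mem_Icc (hr : 0 ≤ rRatio m p j) (a : Fin (m + 1)) :
    epBasis m p j j a a ∈ Set.Icc 0 (1 + rRatio m p j) := by
  have := (Fin.castSucc_lt_last j).ne
  simp only [epBasis, vecMulVec_apply]
  split_ifs <;> simp_all <;> linarith

end

theorem stmt_6_general (m : ℕ) (p : Fin (m + 1) → ℝ)
    (hp : ∀ i, 0 < p i) (j : Fin m) (t : ℝ) (ht : 0 ≤ t) :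
    NormedSpace.exp (-(t • epBasis m p j j)) =
      1 + ((Real.exp (-(t * (1 + rRatio m p j))) - 1) / (1 + rRatio m p j)) •
        epBasis m p j j ∧
    (∀ a b, 0 ≤ NormedSpace.exp (-(t • epBasis m p j j)) a b) ∧
    (∀ a, ∑ b, NormedSpace.exp (-(t • epBasis m p j j)) a b = 1) ∧
    Matrix.vecMul p (NormedSpace.exp (-(t • epBasis m p j j))) = p := by
  have hr : 0 < rRatio m p j := div_pos (hp _) (hp _)
  have hc : 0 < 1 + rRatio m p j := by linarith
  have hexp : exp (-(t • epBasis m p j j)) = 1 +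
      ((Real.exp (-(t * (1 + rRatio m p j))) - 1) / (1 + rRatio m p j)) • epBasis m p j j := by
    rw [← neg_smul, epBasis_eq_vecMulVec,
      exp_smul_vecMulVec _ _ (epRight_dotProduct_epLeft p j ▸ hc.ne'), epRight_dotProduct_epLeft,
      neg_mul]
  have hdecay : Real.exp (-(t * (1 + rRatio m p j))) ≤ 1 :=
    Real.exp_le_one_iff.2 (neg_nonpos.2 (mul_nonneg ht hc.le))
  refine ⟨hexp, fun a b => ?_, fun a => ?_, ?_⟩ <;> rw [hexp]
  · refine one_add_smul_apply_nonneg (fun _ _ => epBasis_apply_nonpos_of_ne hr.le)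
      (epBasis_apply_self_mem_Icc hr.le) (div_nonpos_of_nonpos_of_nonneg (by linarith) hc.le) ?_ a b
    rw [div_mul_cancel₀ _ hc.ne']
    linarith [Real.exp_pos (-(t * (1 + rRatio m p j)))]
  · rw [epBasis_eq_vecMulVec]
    exact sum_one_add_smul_vecMulVec_apply (epRight_dotProduct_one j) _ a
  · rw [epBasis_eq_vecMulVec]
    exact vecMul_one_add_smul_vecMulVec (dotProduct_epLeft (hp _).ne') _

theorem stmt_6 (m : ℕ) (hm : 1 ≤ m) (p : Fin (m + 1) → ℝ)
    (hp : ∀ i, 0 < p i) (hsum : ∑ i, p i = 1) (j : Fin m) (t : ℝ) (ht : 0 ≤ t) :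
    NormedSpace.exp (-(t • epBasis m p j j)) =
      1 + ((Real.exp (-(t * (1 + rRatio m p j))) - 1) / (1 + rRatio m p j)) •
        epBasis m p j j ∧
    (∀ a b, 0 ≤ NormedSpace.exp (-(t • epBasis m p j j)) a b) ∧
    (∀ a, ∑ b, NormedSpace.exp (-(t • epBasis m p j j)) a b = 1) ∧
    Matrix.vecMul p (NormedSpace.exp (-(t • epBasis m p j j))) = p :=
  stmt_6_general m p hp j t ht
end

section
/- For j ∈ [n-1] and r_j := p_j/p_n > 0, the matrix I − τ e^{(p)}_{(j,j)} is entrywise nonnegative with row sums 1 if and only if 0 ≤ τ ≤ min(1, 1/r_j). Moreover, for τ = min(1, 1/r_j), the (n,j) entry of I − τ e^{(p)}_{(j,j)} equals min(1, r_j) (the Metropolis acceptance ratio). -/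
open Matrix

/-!
Since `e_j^T - e_n^T` has entry sum zero, every row of `I - τ e^{(p)}_{(j,j)}` sums to `1`, for
every `τ`. Off the identity, the matrix differs only in the `{j, n}` block
`[[1 - τ, τ], [τ r_j, 1 - τ r_j]]`, which is nonnegative exactly when `0 ≤ τ ≤ 1` and `τ r_j ≤ 1`.
-/

namespace Matrix

variable {ι : Type*} [DecidableEq ι]

theorem sum_one_sub_vecMulVec_apply [Fintype ι] {α : Type*} [Ring α] (u v : ι → α)
    (hv : ∑ b, v b = 0) (a : ι) :
    ∑ b, (1 - vecMulVec u v) a b = 1 := by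
  simp only [sub_apply, Finset.sum_sub_distrib, vecMulVec_apply, ← Finset.mul_sum, hv, mul_zero,
    one_apply, Finset.sum_ite_eq, Finset.mem_univ, if_true, sub_zero]

theorem nonneg_one_sub_smul_vecMulVec_single_iff {i l : ι} (hil : i ≠ l) {r : ℝ} (hr : 0 ≤ r)
    (τ : ℝ) :
    (∀ a b, 0 ≤ (1 - τ • vecMulVec (Pi.single i (1 : ℝ) - r • Pi.single l 1)
      (Pi.single i 1 - Pi.single l 1) : Matrix ι ι ℝ) a b) ↔ 0 ≤ τ ∧ τ ≤ 1 ∧ τ * r ≤ 1 := by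
  have hli := hil.symm
  have entry : ∀ a b, (1 - τ • vecMulVec (Pi.single i (1 : ℝ) - r • Pi.single l 1)
      (Pi.single i 1 - Pi.single l 1) : Matrix ι ι ℝ) a b =
      (if a = b then 1 else 0) - τ * ((if a = i then 1 else 0) - r * (if a = l then 1 else 0)) *
        ((if b = i then 1 else 0) - (if b = l then 1 else 0)) := by
    intro a b
    simp [one_apply, vecMulVec_apply, Pi.single_apply, mul_assoc]
  simp only [entry]
  constructor
  · intro h
    have hii := h i i
    have hil_entry := h i l
    have hll := h l l
    simp only [if_true, if_neg hil, if_neg hli] at hii hil_entry hll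
    refine ⟨by linarith, by linarith, by linarith⟩
  · rintro ⟨hτ0, hτ1, hτr⟩ a b
    have hτr0 : 0 ≤ τ * r := mul_nonneg hτ0 hr
    split_ifs <;> subst_vars <;> simp_all

end Matrix

theorem epBasis_diag_eq_vecMulVec (m : ℕ) (p : Fin (m + 1) → ℝ) (j : Fin m) :
    epBasis m p j j = vecMulVec (Pi.single j.castSucc 1 - rRatio m p j • Pi.single (Fin.last m) 1)
      (Pi.single j.castSucc 1 - Pi.single (Fin.last m) 1) := by
  ext a b
  simp [epBasis, vecMulVec_apply, Pi.single_apply]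

theorem rRatio_pos (m : ℕ) {p : Fin (m + 1) → ℝ} (hp : ∀ i, 0 < p i) (j : Fin m) :
    0 < rRatio m p j :=
  div_pos (hp _) (hp _)

theorem le_min_one_inv_iff {r : ℝ} (hr : 0 < r) (τ : ℝ) :
    τ ≤ min 1 r⁻¹ ↔ τ ≤ 1 ∧ τ * r ≤ 1 := by
  rw [le_min_iff, ← one_div, le_div_iff₀ hr]

theorem min_one_inv_mul {r : ℝ} (hr : 0 < r) : min 1 r⁻¹ * r = min 1 r := by
  rw [min_mul_of_nonneg _ _ hr.le, one_mul, inv_mul_cancel₀ hr.ne', min_comm]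

theorem stmt_8_general (m : ℕ) (p : Fin (m + 1) → ℝ)
    (hp : ∀ i, 0 < p i) (j : Fin m) :
    (∀ τ : ℝ,
      ((∀ a b, 0 ≤ (1 - τ • epBasis m p j j) a b) ∧
        (∀ a, ∑ b, (1 - τ • epBasis m p j j) a b = 1)) ↔
      (0 ≤ τ ∧ τ ≤ min 1 (rRatio m p j)⁻¹)) ∧
    (1 - (min 1 (rRatio m p j)⁻¹) • epBasis m p j j) (Fin.last m) j.castSucc =
      min 1 (rRatio m p j) := by
  have hr := rRatio_pos m hp j
  have hj : j.castSucc ≠ Fin.last m := (Fin.castSucc_lt_last j).ne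
  rw [epBasis_diag_eq_vecMulVec]
  refine ⟨fun τ => ?_, ?_⟩
  · have row_sums (a) : ∑ b, (1 - τ • vecMulVec (Pi.single j.castSucc (1 : ℝ) - rRatio m p j •
        Pi.single (Fin.last m) 1) (Pi.single j.castSucc 1 - Pi.single (Fin.last m) 1) :
        Matrix (Fin (m + 1)) (Fin (m + 1)) ℝ) a b = 1 := by
      rw [← smul_vecMulVec]
      exact sum_one_sub_vecMulVec_apply _ _ (by simp) a
    simp only [row_sums, implies_true, and_true, nonneg_one_sub_smul_vecMulVec_single_iff hj hr.le,
      le_min_one_inv_iff hr]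
  · simp [vecMulVec_apply, hj, hj.symm, min_one_inv_mul hr]

theorem stmt_8 (m : ℕ) (hm : 1 ≤ m) (p : Fin (m + 1) → ℝ)
    (hp : ∀ i, 0 < p i) (hsum : ∑ i, p i = 1) (j : Fin m) :
    (∀ τ : ℝ,
      ((∀ a b, 0 ≤ (1 - τ • epBasis m p j j) a b) ∧
        (∀ a, ∑ b, (1 - τ • epBasis m p j j) a b = 1)) ↔
      (0 ≤ τ ∧ τ ≤ min 1 (rRatio m p j)⁻¹)) ∧
    (1 - (min 1 (rRatio m p j)⁻¹) • epBasis m p j j) (Fin.last m) j.castSucc =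
      min 1 (rRatio m p j) :=
  stmt_8_general m p hp j
end

section
/- Let 𝒥 = {j_1,…,j_d} ⊆ [n-1], and for matrices α, β ∈ M_{n-1,n-1}(ℝ) define α^{(p)}_{(𝒥)} := ∑_{u,v=1}^d α_{j_u j_v} e^{(p)}_{(j_u, j_v)} and r_{(𝒥)} := (r_{j_1},…,r_{j_d}) as a row vector. If γ^{(p)}_{(𝒥)} = α^{(p)}_{(𝒥)} β^{(p)}_{(𝒥)}, then the d×d coefficient matrix satisfies γ_{(𝒥)} = α_{(𝒥)} (I + 1 r_{(𝒥)}) β_{(𝒥)}, where 1 is the all-ones column vector in ℝ^d and α_{(𝒥)} is the d×d submatrix (α_{j_u j_v}). -/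
open Matrix

/-!
Since `e^{(p)}_{(j,k)} = col j ⬝ row kᵀ`, a combination `∑ c_{uv} e^{(p)}_{(J u, J v)}` equals
`colMatrix * c * rowMatrix`. The product rule is the statement
`rowMatrix * colMatrix = I + 1 r_{(𝒥)}`, which turns the product of two combinations into the
combination with coefficients `α (I + 1 r_{(𝒥)}) β`. The coefficients are read off as the
`𝒥 × 𝒥` block, on which `colMatrix` and `rowMatrix` restrict to the identity.
-/

theorem Matrix.sum_sum_smul_vecMulVec {R l n ι κ : Type*} [CommSemiring R] [Fintype ι]
    [Fintype κ] (c : Matrix ι κ R) (x : ι → l → R) (y : κ → n → R) :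
    ∑ u, ∑ v, c u v • vecMulVec (x u) (y v) = (of fun a u => x u a) * c * of y := by
  ext a b
  simp only [sum_apply, smul_apply, vecMulVec_apply, mul_apply, of_apply, smul_eq_mul,
    Finset.sum_mul]
  rw [Finset.sum_comm]
  exact Finset.sum_congr rfl fun _ _ => Finset.sum_congr rfl fun _ _ => by ring

namespace epBasis

variable (m : ℕ) (p : Fin (m + 1) → ℝ)

noncomputable def col (j : Fin m) : Fin (m + 1) → ℝ :=
  fun a => (if a = j.castSucc then 1 else 0) - rRatio m p j * (if a = Fin.last m then 1 else 0)

def row (k : Fin m) : Fin (m + 1) → ℝ :=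
  fun b => (if b = k.castSucc then 1 else 0) - (if b = Fin.last m then 1 else 0)

theorem col_castSucc (j i : Fin m) : col m p j i.castSucc = if i = j then 1 else 0 := by
  simp [col, (Fin.castSucc_lt_last i).ne]

theorem row_castSucc (k i : Fin m) : row m k i.castSucc = if i = k then 1 else 0 := by
  simp [row, (Fin.castSucc_lt_last i).ne]

theorem row_dotProduct_col (k j : Fin m) :
    row m k ⬝ᵥ col m p j = (if k = j then 1 else 0) + rRatio m p j := by
  simp [row, col, dotProduct, sub_mul, mul_sub, ite_mul, Finset.sum_sub_distrib,
    (Fin.castSucc_lt_last _).ne, (Fin.castSucc_lt_last _).ne', eq_comm]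

variable {ι : Type*} (J : ι → Fin m)

noncomputable def colMatrix : Matrix (Fin (m + 1)) ι ℝ := of fun a u => col m p (J u) a

def rowMatrix : Matrix ι (Fin (m + 1)) ℝ := of fun v b => row m (J v) b

theorem sum_sum_smul_eq [Fintype ι] (c : ι → ι → ℝ) :
    ∑ u, ∑ v, c u v • epBasis m p (J u) (J v) = colMatrix m p J * of c * rowMatrix m J :=
  sum_sum_smul_vecMulVec (of c) _ _

variable {J}

theorem rowMatrix_mul_colMatrix [Fintype ι] [DecidableEq ι] (hJ : J.Injective) :
    rowMatrix m J * colMatrix m p J = 1 + vecMulVec (fun _ => 1) (fun u => rRatio m p (J u)) := by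
  ext v u
  change row m (J v) ⬝ᵥ col m p (J u) = _
  simp [row_dotProduct_col, hJ.eq_iff, one_apply, vecMulVec_apply]

theorem colMatrix_submatrix [DecidableEq ι] (hJ : J.Injective) :
    (colMatrix m p J).submatrix (Fin.castSucc ∘ J) id = 1 := by
  ext a u
  simp [colMatrix, col_castSucc, hJ.eq_iff, one_apply]

theorem rowMatrix_submatrix [DecidableEq ι] (hJ : J.Injective) :
    (rowMatrix m J).submatrix id (Fin.castSucc ∘ J) = 1 := by
  ext v b
  simp [rowMatrix, row_castSucc, hJ.eq_iff, one_apply, eq_comm]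

theorem colMatrix_mul_mul_rowMatrix_submatrix [Fintype ι] [DecidableEq ι] (hJ : J.Injective)
    (c : Matrix ι ι ℝ) :
    (colMatrix m p J * c * rowMatrix m J).submatrix (Fin.castSucc ∘ J) (Fin.castSucc ∘ J) = c := by
  rw [submatrix_mul _ _ _ id _ Function.bijective_id,
    submatrix_mul _ _ _ id _ Function.bijective_id, colMatrix_submatrix m p hJ,
    rowMatrix_submatrix m hJ, submatrix_id_id, Matrix.one_mul, Matrix.mul_one]

theorem colMatrix_mul_mul_rowMatrix_mul [Fintype ι] [DecidableEq ι] (hJ : J.Injective)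
    (A B : Matrix ι ι ℝ) :
    colMatrix m p J * A * rowMatrix m J * (colMatrix m p J * B * rowMatrix m J) =
      colMatrix m p J *
        (A * (1 + vecMulVec (fun _ => 1) (fun u => rRatio m p (J u))) * B) * rowMatrix m J := by
  rw [← rowMatrix_mul_colMatrix m p hJ]
  simp only [Matrix.mul_assoc]

end epBasis

theorem stmt_9_general (m : ℕ) (p : Fin (m + 1) → ℝ)
    (d : ℕ) (J : Fin d → Fin m) (hJ : Function.Injective J)
    (α β γ : Matrix (Fin m) (Fin m) ℝ)
    (h : (∑ u : Fin d, ∑ v : Fin d, γ (J u) (J v) • epBasis m p (J u) (J v)) =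
      (∑ u : Fin d, ∑ v : Fin d, α (J u) (J v) • epBasis m p (J u) (J v)) *
      (∑ u : Fin d, ∑ v : Fin d, β (J u) (J v) • epBasis m p (J u) (J v))) :
    (Matrix.of fun u v : Fin d => γ (J u) (J v)) =
      (Matrix.of fun u v : Fin d => α (J u) (J v)) *
        (1 + Matrix.vecMulVec (fun _ : Fin d => (1 : ℝ))
              (fun u : Fin d => rRatio m p (J u))) *
        (Matrix.of fun u v : Fin d => β (J u) (J v)) := by
  simp only [epBasis.sum_sum_smul_eq] at h
  rw [epBasis.colMatrix_mul_mul_rowMatrix_mul m p hJ] at h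
  simpa only [epBasis.colMatrix_mul_mul_rowMatrix_submatrix m p hJ] using
    congrArg (submatrix · (Fin.castSucc ∘ J) (Fin.castSucc ∘ J)) h

theorem stmt_9 (m : ℕ) (hm : 1 ≤ m) (p : Fin (m + 1) → ℝ)
    (hp : ∀ i, 0 < p i) (hsum : ∑ i, p i = 1)
    (d : ℕ) (J : Fin d → Fin m) (hJ : Function.Injective J)
    (α β γ : Matrix (Fin m) (Fin m) ℝ)
    (h : (∑ u : Fin d, ∑ v : Fin d, γ (J u) (J v) • epBasis m p (J u) (J v)) =
      (∑ u : Fin d, ∑ v : Fin d, α (J u) (J v) • epBasis m p (J u) (J v)) *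
      (∑ u : Fin d, ∑ v : Fin d, β (J u) (J v) • epBasis m p (J u) (J v))) :
    (Matrix.of fun u v : Fin d => γ (J u) (J v)) =
      (Matrix.of fun u v : Fin d => α (J u) (J v)) *
        (1 + Matrix.vecMulVec (fun _ : Fin d => (1 : ℝ))
              (fun u : Fin d => rRatio m p (J u))) *
        (Matrix.of fun u v : Fin d => β (J u) (J v)) :=
  stmt_9_general m p d J hJ α β γ h
end

section
/- The Metropolis matrix M := I − (1/maxΔ(A)) A, where A := A^{(p;1)}_{(𝒥)} and maxΔ(A) is the maximal diagonal entry of A, is entrywise nonnegative with row sums 1, satisfies pM = p, and has at least one zero entry (i.e., it lies on the boundary of the polytope of p-invariant stochastic matrices). Explicitly maxΔ(A) = (1 + r_{(𝒥)}·1 − min{1, min_u r_{j_u}})/(1 + r_{(𝒥)}·1). -/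
open Matrix

namespace Matrix

variable {n R : Type*} [DecidableEq n]

theorem one_sub_inv_smul_apply_nonneg [Field R] [LinearOrder R] [IsStrictOrderedRing R]
    {A : Matrix n n R} {c : R} (hc : 0 < c) (hdiag : ∀ i, A i i ≤ c)
    (hoff : Pairwise fun a b => A a b ≤ 0) (a b : n) : 0 ≤ (1 - c⁻¹ • A) a b := by
  rw [sub_apply, smul_apply, smul_eq_mul, one_apply]
  split_ifs with hab
  · subst hab
    rw [sub_nonneg, inv_mul_le_iff₀ hc, mul_one]
    exact hdiag a
  · rw [zero_sub, neg_nonneg]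
    exact mul_nonpos_of_nonneg_of_nonpos (inv_nonneg.2 hc.le) (hoff hab)

theorem one_sub_smul_mulVec_one [Fintype n] [CommRing R] {A : Matrix n n R} (h : A *ᵥ 1 = 0)
    (c : R) : (1 - c • A) *ᵥ 1 = 1 := by
  rw [sub_mulVec, smul_mulVec, h, smul_zero, one_mulVec, sub_zero]

theorem vecMul_one_sub_smul [Fintype n] [CommRing R] {A : Matrix n n R} {p : n → R}
    (h : p ᵥ* A = 0) (c : R) : p ᵥ* (1 - c • A) = p := by
  rw [vecMul_sub, vecMul_smul, h, smul_zero, vecMul_one, sub_zero]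

theorem one_sub_inv_smul_apply_self_of_eq [Field R] {A : Matrix n n R} {c : R} {i : n}
    (h : A i i = c) (hc : c ≠ 0) : (1 - c⁻¹ • A) i i = 0 := by
  rw [sub_apply, smul_apply, h, one_apply_eq, smul_eq_mul, inv_mul_cancel₀ hc, sub_self]

end Matrix

theorem eq_last_or_exists_eq_castSucc_or {m d : ℕ} (J : Fin (d + 1) → Fin m) (a : Fin (m + 1)) :
    a = Fin.last m ∨ (∃ u, a = (J u).castSucc) ∨ (a ≠ Fin.last m ∧ ∀ u, a ≠ (J u).castSucc) := by
  rcases eq_or_ne a (Fin.last m) with hl | hl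
  · exact .inl hl
  · by_cases hJ : ∃ u, a = (J u).castSucc
    · exact .inr (.inl hJ)
    · exact .inr (.inr ⟨hl, fun u hu => hJ ⟨u, hu⟩⟩)

section

variable {m : ℕ} (p : Fin (m + 1) → ℝ)

theorem epBasis_mulVec_one (j k : Fin m) : epBasis m p j k *ᵥ 1 = 0 := by
  ext a
  simp [epBasis, vecMulVec_mulVec, dotProduct, Finset.sum_sub_distrib]

theorem vecMul_epBasis (hp : p (Fin.last m) ≠ 0) (j k : Fin m) : p ᵥ* epBasis m p j k = 0 := by
  have : p ⬝ᵥ (fun a => (if a = j.castSucc then 1 else 0) -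
      rRatio m p j * (if a = Fin.last m then 1 else 0)) = 0 := by
    simp [dotProduct, mul_sub, Finset.sum_sub_distrib, rRatio, mul_div_cancel₀ _ hp]
  rw [epBasis, vecMul_vecMulVec, this, zero_smul]

variable {d : ℕ}

-- `ratioMass p J = 1 + r_{(𝒥)}·1`, `minRatio p J = min{1, min_u r_{j_u}}`, and
-- `ratioGenerator p J = A^{(p;1)}_{(𝒥)}`.
noncomputable def ratioMass (p : Fin (m + 1) → ℝ) (J : Fin (d + 1) → Fin m) : ℝ :=
  1 + ∑ w, rRatio m p (J w)

noncomputable def minRatio (p : Fin (m + 1) → ℝ) (J : Fin (d + 1) → Fin m) : ℝ :=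
  min 1 (Finset.univ.inf' Finset.univ_nonempty fun u => rRatio m p (J u))

noncomputable def ratioGenerator (p : Fin (m + 1) → ℝ) (J : Fin (d + 1) → Fin m) :
    Matrix (Fin (m + 1)) (Fin (m + 1)) ℝ :=
  ∑ u, ∑ v, ((if J u = J v then (1 : ℝ) else 0) - rRatio m p (J v) / ratioMass p J) •
    epBasis m p (J u) (J v)

variable {J : Fin (d + 1) → Fin m}

theorem sum_rRatio_eq_ratioMass_sub_one : ∑ w, rRatio m p (J w) = ratioMass p J - 1 := by
  rw [ratioMass, add_sub_cancel_left]

theorem one_lt_ratioMass (hp : ∀ i, 0 < p i) : 1 < ratioMass p J :=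
  lt_add_of_pos_right 1 <| Finset.sum_pos (fun _ _ => div_pos (hp _) (hp _)) Finset.univ_nonempty

theorem ratioGenerator_mulVec_one : ratioGenerator p J *ᵥ 1 = 0 := by
  simp [ratioGenerator, sum_mulVec, smul_mulVec, epBasis_mulVec_one]

theorem vecMul_ratioGenerator (hp : p (Fin.last m) ≠ 0) : p ᵥ* ratioGenerator p J = 0 := by
  simp [ratioGenerator, vecMul_sum, vecMul_smul, vecMul_epBasis p hp]

variable (hJ : Function.Injective J)
include hJ

theorem ratioGenerator_apply (a b : Fin (m + 1)) :
    ratioGenerator p J a b = ∑ u, ∑ v,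
      ((if u = v then (1 : ℝ) else 0) - rRatio m p (J v) / ratioMass p J) *
      (((if a = (J u).castSucc then 1 else 0) -
          rRatio m p (J u) * (if a = Fin.last m then 1 else 0)) *
        ((if b = (J v).castSucc then 1 else 0) - (if b = Fin.last m then 1 else 0))) := by
  simp [ratioGenerator, Matrix.sum_apply, epBasis, vecMulVec_apply, hJ.eq_iff]

theorem ratioGenerator_apply_castSucc_castSucc (u v : Fin (d + 1)) :
    ratioGenerator p J (J u).castSucc (J v).castSucc =
      (if u = v then 1 else 0) - rRatio m p (J v) / ratioMass p J := by
  rw [ratioGenerator_apply p hJ]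
  simp [hJ.eq_iff, Fin.castSucc_ne_last, eq_comm]

theorem ratioGenerator_apply_castSucc_last (hp : ∀ i, 0 < p i) (u : Fin (d + 1)) :
    ratioGenerator p J (J u).castSucc (Fin.last m) = -(1 / ratioMass p J) := by
  have := (zero_lt_one.trans (one_lt_ratioMass p hp (J := J))).ne'
  rw [ratioGenerator_apply p hJ]
  simp [hJ.eq_iff, Fin.castSucc_ne_last, eq_comm, ← Finset.sum_div,
    sum_rRatio_eq_ratioMass_sub_one]
  field_simp
  ring

theorem ratioGenerator_apply_last_castSucc (hp : ∀ i, 0 < p i) (v : Fin (d + 1)) :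
    ratioGenerator p J (Fin.last m) (J v).castSucc = -(rRatio m p (J v) / ratioMass p J) := by
  have := (zero_lt_one.trans (one_lt_ratioMass p hp (J := J))).ne'
  rw [ratioGenerator_apply p hJ]
  simp [hJ.eq_iff, Fin.castSucc_ne_last, eq_comm, sub_mul, Finset.sum_sub_distrib, ite_mul,
    ← Finset.mul_sum, sum_rRatio_eq_ratioMass_sub_one]
  field_simp
  ring

theorem ratioGenerator_apply_last_last (hp : ∀ i, 0 < p i) :
    ratioGenerator p J (Fin.last m) (Fin.last m) = 1 - 1 / ratioMass p J := by
  have := (zero_lt_one.trans (one_lt_ratioMass p hp (J := J))).ne'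
  rw [ratioGenerator_apply p hJ]
  simp [(Fin.castSucc_ne_last _).symm, sub_mul, Finset.sum_sub_distrib, ite_mul,
    ← Finset.mul_sum, ← Finset.sum_mul, ← Finset.sum_div, sum_rRatio_eq_ratioMass_sub_one]
  field_simp
  ring

theorem ratioGenerator_apply_of_row_ne {a : Fin (m + 1)} (ha : a ≠ Fin.last m)
    (hJa : ∀ u, a ≠ (J u).castSucc) (b : Fin (m + 1)) : ratioGenerator p J a b = 0 := by
  rw [ratioGenerator_apply p hJ]
  simp [ha, hJa]

theorem ratioGenerator_apply_of_col_ne {b : Fin (m + 1)} (hb : b ≠ Fin.last m)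
    (hJb : ∀ v, b ≠ (J v).castSucc) (a : Fin (m + 1)) : ratioGenerator p J a b = 0 := by
  rw [ratioGenerator_apply p hJ]
  simp [hb, hJb]

variable {p} (hp : ∀ i, 0 < p i)
include hp

theorem ratioGenerator_apply_self_le (i : Fin (m + 1)) :
    ratioGenerator p J i i ≤ 1 - minRatio p J / ratioMass p J := by
  have hS := one_lt_ratioMass p hp (J := J)
  have ht : minRatio p J ≤ 1 := min_le_left _ _
  rcases eq_last_or_exists_eq_castSucc_or J i with rfl | ⟨u, rfl⟩ | ⟨hl, hJi⟩
  · rw [ratioGenerator_apply_last_last p hJ hp]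
    gcongr
  · rw [ratioGenerator_apply_castSucc_castSucc p hJ, if_pos rfl]
    gcongr
    exact (min_le_right _ _).trans (Finset.inf'_le _ (Finset.mem_univ u))
  · rw [ratioGenerator_apply_of_row_ne p hJ hl hJi, sub_nonneg, div_le_one (by linarith)]
    linarith

theorem exists_ratioGenerator_apply_self_eq :
    ∃ i, ratioGenerator p J i i = 1 - minRatio p J / ratioMass p J := by
  obtain ⟨u, -, hu⟩ := Finset.exists_mem_eq_inf' Finset.univ_nonempty fun u => rRatio m p (J u)
  rcases le_total (rRatio m p (J u)) 1 with h | h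
  · refine ⟨(J u).castSucc, ?_⟩
    rw [ratioGenerator_apply_castSucc_castSucc p hJ, if_pos rfl, minRatio, hu, min_eq_right h]
  · refine ⟨Fin.last m, ?_⟩
    rw [ratioGenerator_apply_last_last p hJ hp, minRatio, hu, min_eq_left h]

theorem sup'_ratioGenerator_apply_self :
    Finset.univ.sup' Finset.univ_nonempty (fun i => ratioGenerator p J i i) =
      1 - minRatio p J / ratioMass p J := by
  obtain ⟨i, hi⟩ := exists_ratioGenerator_apply_self_eq hJ hp
  exact le_antisymm (Finset.sup'_le _ _ fun i _ => ratioGenerator_apply_self_le hJ hp i)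
    (hi ▸ Finset.le_sup' (fun i => ratioGenerator p J i i) (Finset.mem_univ i))

theorem ratioGenerator_apply_nonpos {a b : Fin (m + 1)} (hab : a ≠ b) :
    ratioGenerator p J a b ≤ 0 := by
  have hS : 0 < ratioMass p J := zero_lt_one.trans (one_lt_ratioMass p hp)
  have hr : ∀ v, 0 ≤ rRatio m p (J v) / ratioMass p J := fun v =>
    div_nonneg (div_pos (hp _) (hp _)).le hS.le
  rcases eq_last_or_exists_eq_castSucc_or J b with rfl | ⟨v, rfl⟩ | ⟨hl, hJb⟩
  · rcases eq_last_or_exists_eq_castSucc_or J a with rfl | ⟨u, rfl⟩ | ⟨hl, hJa⟩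
    · exact absurd rfl hab
    · rw [ratioGenerator_apply_castSucc_last p hJ hp, neg_nonpos]
      positivity
    · exact (ratioGenerator_apply_of_row_ne p hJ hl hJa _).le
  · rcases eq_last_or_exists_eq_castSucc_or J a with rfl | ⟨u, rfl⟩ | ⟨hl, hJa⟩
    · rw [ratioGenerator_apply_last_castSucc p hJ hp, neg_nonpos]
      exact hr v
    · have huv : u ≠ v := fun h => hab (h ▸ rfl)
      rw [ratioGenerator_apply_castSucc_castSucc p hJ, if_neg huv, zero_sub, neg_nonpos]
      exact hr v
    · exact (ratioGenerator_apply_of_row_ne p hJ hl hJa _).le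
  · exact (ratioGenerator_apply_of_col_ne p hJ hl hJb _).le

end

theorem stmt_12_general (m : ℕ) (p : Fin (m + 1) → ℝ)
    (hp : ∀ i, 0 < p i)
    (d : ℕ) (J : Fin (d + 1) → Fin m) (hJ : Function.Injective J)
    (A M : Matrix (Fin (m + 1)) (Fin (m + 1)) ℝ)
    (hA : A = ∑ u : Fin (d + 1), ∑ v : Fin (d + 1),
      ((if J u = J v then (1 : ℝ) else 0) -
        rRatio m p (J v) / (1 + ∑ w : Fin (d + 1), rRatio m p (J w))) •
        epBasis m p (J u) (J v))
    (maxD : ℝ)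
    (hmaxD : maxD = Finset.univ.sup' Finset.univ_nonempty (fun i => A i i))
    (hM : M = 1 - maxD⁻¹ • A) :
    (∀ a b, 0 ≤ M a b) ∧
    (∀ a, ∑ b, M a b = 1) ∧
    Matrix.vecMul p M = p ∧
    (∃ a b, M a b = 0) ∧
    maxD = (1 + (∑ u : Fin (d + 1), rRatio m p (J u)) -
        min 1 (Finset.univ.inf' Finset.univ_nonempty fun u => rRatio m p (J u))) /
      (1 + ∑ u : Fin (d + 1), rRatio m p (J u)) := by
  obtain rfl : A = ratioGenerator p J := hA
  rw [sup'_ratioGenerator_apply_self hJ hp] at hmaxD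
  have hS := one_lt_ratioMass p hp (J := J)
  have hmaxD_pos : 0 < maxD := by
    rw [hmaxD, sub_pos, div_lt_one (by linarith)]
    exact (min_le_left _ _).trans_lt hS
  obtain ⟨i, hi⟩ := exists_ratioGenerator_apply_self_eq hJ hp
  subst hM
  refine ⟨one_sub_inv_smul_apply_nonneg hmaxD_pos
      (fun i => hmaxD ▸ ratioGenerator_apply_self_le hJ hp i)
      (fun _ _ hab => ratioGenerator_apply_nonpos hJ hp hab),
    fun a => ?_, vecMul_one_sub_smul (vecMul_ratioGenerator p (hp _).ne') _,
    ⟨i, i, one_sub_inv_smul_apply_self_of_eq (hi.trans hmaxD.symm) hmaxD_pos.ne'⟩,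
    by rw [hmaxD, one_sub_div (by linarith)]; rfl⟩
  simpa [mulVec, dotProduct] using
    congrFun (one_sub_smul_mulVec_one (ratioGenerator_mulVec_one p) maxD⁻¹) a

theorem stmt_12 (m : ℕ) (hm : 1 ≤ m) (p : Fin (m + 1) → ℝ)
    (hp : ∀ i, 0 < p i) (hsum : ∑ i, p i = 1)
    (d : ℕ) (J : Fin (d + 1) → Fin m) (hJ : Function.Injective J)
    (A M : Matrix (Fin (m + 1)) (Fin (m + 1)) ℝ)
    (hA : A = ∑ u : Fin (d + 1), ∑ v : Fin (d + 1),
      ((if J u = J v then (1 : ℝ) else 0) -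
        rRatio m p (J v) / (1 + ∑ w : Fin (d + 1), rRatio m p (J w))) •
        epBasis m p (J u) (J v))
    (maxD : ℝ)
    (hmaxD : maxD = Finset.univ.sup' Finset.univ_nonempty (fun i => A i i))
    (hM : M = 1 - maxD⁻¹ • A) :
    (∀ a b, 0 ≤ M a b) ∧
    (∀ a, ∑ b, M a b = 1) ∧
    Matrix.vecMul p M = p ∧
    (∃ a b, M a b = 0) ∧
    maxD = (1 + (∑ u : Fin (d + 1), rRatio m p (J u)) -
        min 1 (Finset.univ.inf' Finset.univ_nonempty fun u => rRatio m p (J u))) /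
      (1 + ∑ u : Fin (d + 1), rRatio m p (J u)) :=
  stmt_12_general m p hp d J hJ A M hA maxD hmaxD hM
end

section
/- If an irreducible ergodic stochastic matrix P of size n×n has unique invariant probability vector p, then p = 1^T (P − I + 11^T)^{-1}, i.e., the matrix P − I + 11^T is invertible and the row vector of its inverse's column sums equals p. -/
/-!
Write `A = P - I + 11ᵀ`. Since `p P = p` and `p 1 = 1`, we get `p A = 1ᵀ`, so once `A` is
invertible, `p = 1ᵀ A⁻¹`. If `v A = 0`, multiplying by `1` on the right (`A 1 = n 1`) gives
`v 1 = 0`, and then `v P = v`. A real invariant vector `x` of a stochastic matrix has invariant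
`|x|`, hence invariant `|x| ± x`, which are nonnegative of mass `∑ |x|` when `∑ x = 0`; uniqueness
of the invariant distribution forces `|x| + x = |x| - x`, i.e. `x = 0`.
-/

open Matrix

namespace Matrix

variable {ι : Type*} [Fintype ι] {P : Matrix ι ι ℝ}

theorem abs_vecMul_le (hP : ∀ i j, 0 ≤ P i j) (x : ι → ℝ) : |x ᵥ* P| ≤ |x| ᵥ* P := by
  intro j
  simp only [Pi.abs_apply, vecMul, dotProduct]
  refine (Finset.abs_sum_le_sum_abs _ _).trans_eq (Finset.sum_congr rfl fun i _ => ?_)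
  rw [abs_mul, abs_of_nonneg (hP i j)]

theorem sum_vecMul_of_sum_row_eq_one (hrow : ∀ i, ∑ j, P i j = 1) (x : ι → ℝ) :
    ∑ j, (x ᵥ* P) j = ∑ i, x i := by
  simp only [vecMul, dotProduct]
  rw [Finset.sum_comm]
  simp only [← Finset.mul_sum, hrow, mul_one]

theorem abs_vecMul_eq_of_vecMul_eq (hP : ∀ i j, 0 ≤ P i j) (hrow : ∀ i, ∑ j, P i j = 1)
    {x : ι → ℝ} (hx : x ᵥ* P = x) : |x| ᵥ* P = |x| := by
  have hle : |x| ≤ |x| ᵥ* P := by simpa only [hx] using abs_vecMul_le hP x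
  have hsum : ∑ j, |x| j = ∑ j, (|x| ᵥ* P) j := (sum_vecMul_of_sum_row_eq_one hrow _).symm
  funext j
  exact ((Finset.sum_eq_sum_iff_of_le fun j _ => hle j).mp hsum j (Finset.mem_univ j)).symm

theorem eq_of_vecMul_eq_self_of_sum_eq {p : ι → ℝ}
    (huniq : ∀ q : ι → ℝ, (∀ i, 0 ≤ q i) → ∑ i, q i = 1 → q ᵥ* P = q → q = p)
    {u w : ι → ℝ} (hu₀ : 0 ≤ u) (hw₀ : 0 ≤ w) (hu : u ᵥ* P = u) (hw : w ᵥ* P = w)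
    (hsum : ∑ i, u i = ∑ i, w i) : u = w := by
  set s := ∑ i, u i
  rcases (Finset.sum_nonneg fun i _ => hu₀ i : 0 ≤ s).eq_or_lt with hs | hs
  · have hu0 : u = 0 := funext ((Finset.sum_eq_zero_iff_of_nonneg fun i _ => hu₀ i).mp hs.symm
      · (Finset.mem_univ _))
    have hw0 : w = 0 := funext ((Finset.sum_eq_zero_iff_of_nonneg fun i _ => hw₀ i).mp
      (hs.trans hsum).symm · (Finset.mem_univ _))
    rw [hu0, hw0]
  · have normalize : ∀ v : ι → ℝ, 0 ≤ v → v ᵥ* P = v → ∑ i, v i = s → s⁻¹ • v = p := by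
      intro v hv₀ hv hvs
      refine huniq _ (fun i => smul_nonneg (inv_nonneg.mpr hs.le) (hv₀ i)) ?_ ?_
      · simp only [Pi.smul_apply, smul_eq_mul, ← Finset.mul_sum, hvs]
        exact inv_mul_cancel₀ hs.ne'
      · rw [smul_vecMul, hv]
    exact smul_right_injective _ (inv_ne_zero hs.ne')
      ((normalize u hu₀ hu rfl).trans (normalize w hw₀ hw hsum.symm).symm)

theorem eq_zero_of_vecMul_eq_self_of_sum_eq_zero (hP : ∀ i j, 0 ≤ P i j)
    (hrow : ∀ i, ∑ j, P i j = 1) {p : ι → ℝ}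
    (huniq : ∀ q : ι → ℝ, (∀ i, 0 ≤ q i) → ∑ i, q i = 1 → q ᵥ* P = q → q = p)
    {x : ι → ℝ} (hx : x ᵥ* P = x) (hsum : ∑ i, x i = 0) : x = 0 := by
  have habs := abs_vecMul_eq_of_vecMul_eq hP hrow hx
  have h := eq_of_vecMul_eq_self_of_sum_eq huniq (u := x + |x|) (w := |x| - x)
    (fun i => add_abs_nonneg (x i)) (fun i => sub_nonneg.mpr (le_abs_self (x i)))
    (by rw [add_vecMul, habs, hx]) (by rw [sub_vecMul, habs, hx])
    (by simp only [Pi.add_apply, Pi.sub_apply, Finset.sum_add_distrib, Finset.sum_sub_distrib,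
      hsum, zero_add, sub_zero])
  funext i
  have := congrFun h i
  simp only [Pi.add_apply, Pi.sub_apply] at this
  simp only [Pi.zero_apply]
  linarith

variable [DecidableEq ι]

theorem vecMul_sub_one_add_ones (v : ι → ℝ) :
    v ᵥ* (P - 1 + of fun _ _ => (1 : ℝ)) = v ᵥ* P - v + fun _ => ∑ i, v i := by
  rw [vecMul_add, vecMul_sub, vecMul_one]
  congr 1
  funext j
  simp [vecMul, dotProduct]

theorem isUnit_sub_one_add_ones [Nonempty ι] (hP : ∀ i j, 0 ≤ P i j)
    (hrow : ∀ i, ∑ j, P i j = 1) {p : ι → ℝ}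
    (huniq : ∀ q : ι → ℝ, (∀ i, 0 ≤ q i) → ∑ i, q i = 1 → q ᵥ* P = q → q = p) :
    IsUnit (P - 1 + of fun _ _ => (1 : ℝ)) := by
  rw [isUnit_iff_isUnit_det, isUnit_iff_ne_zero]
  intro hdet
  obtain ⟨v, hv₀, hv⟩ := exists_vecMul_eq_zero_iff.mpr hdet
  rw [vecMul_sub_one_add_ones] at hv
  have hsum : ∑ i, v i = 0 := by
    have h := congrArg (fun w : ι → ℝ => ∑ j, w j) hv
    simp only [Pi.add_apply, Pi.sub_apply, Pi.zero_apply, Finset.sum_add_distrib,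
      Finset.sum_sub_distrib, sum_vecMul_of_sum_row_eq_one hrow, sub_self, zero_add,
      Finset.sum_const, Finset.card_univ, nsmul_eq_mul, mul_zero] at h
    exact (mul_eq_zero.mp h).resolve_left
      (Nat.cast_ne_zero.mpr (Fintype.card_ne_zero (α := ι)))
  have hvP : v ᵥ* P = v := by
    funext j
    have hj := congrFun hv j
    simp only [Pi.add_apply, Pi.sub_apply, Pi.zero_apply, hsum, add_zero] at hj
    linarith
  exact hv₀ (eq_zero_of_vecMul_eq_self_of_sum_eq_zero hP hrow huniq hvP hsum)

theorem vecMul_sub_one_add_ones_of_vecMul_eq_self {p : ι → ℝ} (hinv : p ᵥ* P = p)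
    (hpsum : ∑ i, p i = 1) : p ᵥ* (P - 1 + of fun _ _ => (1 : ℝ)) = fun _ => 1 := by
  rw [vecMul_sub_one_add_ones, hinv, hpsum, sub_self, zero_add]

end Matrix

theorem stmt_13_general (n : ℕ) (P : Matrix (Fin n) (Fin n) ℝ)
    (hnonneg : ∀ i j, 0 ≤ P i j) (hrow : ∀ i, ∑ j, P i j = 1)
    (p : Fin n → ℝ) (hpsum : ∑ i, p i = 1)
    (hinv : Matrix.vecMul p P = p)
    (huniq : ∀ q : Fin n → ℝ, (∀ i, 0 ≤ q i) → ∑ i, q i = 1 →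
      Matrix.vecMul q P = q → q = p) :
    IsUnit (P - 1 + Matrix.of fun _ _ : Fin n => (1 : ℝ)) ∧
    p = Matrix.vecMul (fun _ => (1 : ℝ))
      (P - 1 + Matrix.of fun _ _ : Fin n => (1 : ℝ))⁻¹ := by
  have : Nonempty (Fin n) :=
    Finset.univ_nonempty_iff.mp (Finset.nonempty_of_sum_ne_zero (hpsum ▸ one_ne_zero))
  set A := P - 1 + Matrix.of fun _ _ : Fin n => (1 : ℝ)
  have hA : IsUnit A := isUnit_sub_one_add_ones hnonneg hrow huniq
  refine ⟨hA, ?_⟩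
  calc p = p ᵥ* (A * A⁻¹) := by
        rw [mul_nonsing_inv _ ((isUnit_iff_isUnit_det _).mp hA), vecMul_one]
    _ = (fun _ => 1) ᵥ* A⁻¹ := by
      rw [← vecMul_vecMul, vecMul_sub_one_add_ones_of_vecMul_eq_self hinv hpsum]

theorem stmt_13 (n : ℕ) (hn : 0 < n) (P : Matrix (Fin n) (Fin n) ℝ)
    (hnonneg : ∀ i j, 0 ≤ P i j) (hrow : ∀ i, ∑ j, P i j = 1)
    (hprim : ∃ k : ℕ, ∀ i j, 0 < (P ^ k) i j)
    (p : Fin n → ℝ) (hp : ∀ i, 0 ≤ p i) (hpsum : ∑ i, p i = 1)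
    (hinv : Matrix.vecMul p P = p)
    (huniq : ∀ q : Fin n → ℝ, (∀ i, 0 ≤ q i) → ∑ i, q i = 1 →
      Matrix.vecMul q P = q → q = p) :
    IsUnit (P - 1 + Matrix.of fun _ _ : Fin n => (1 : ℝ)) ∧
    p = Matrix.vecMul (fun _ => (1 : ℝ))
      (P - 1 + Matrix.of fun _ _ : Fin n => (1 : ℝ))⁻¹ :=
  stmt_13_general n P hnonneg hrow p hpsum hinv huniq
end

section
/- Suppose f : ℝ → ℝ is a bijective differentiable function such that there exists a function g with f^{-1}(ζ x) − f^{-1}(ζ y) = g(x,y) for all x, y in the domain and all ζ > 0 (i.e., the difference is independent of ζ). Then y · (f^{-1})'(y) is constant, and hence f(x) = exp(cx + c') for some constants c ≠ 0 and c'. -/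
/-!
Setting `x = 1` shows that `finv (ζ * y) - finv ζ` does not depend on `ζ`, so `finv` turns
products into sums up to the constant `finv 1`. Transported back through `f`, this says that
`t ↦ f (t + finv 1)` is a continuous positive solution of Cauchy's exponential equation,
hence `t ↦ exp (k * t)`; the inverse is then an affine function of `log`.
-/

open Real

theorem Real.eq_mul_of_continuous_of_map_add {H : ℝ → ℝ} (hc : Continuous H)
    (hadd : ∀ s t, H (s + t) = H s + H t) (t : ℝ) : H t = t * H 1 := by
  simpa using map_real_smul (AddMonoidHom.mk' H hadd) hc t 1

theorem Real.eq_exp_mul_of_continuous_of_map_add {F : ℝ → ℝ} (hc : Continuous F)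
    (hpos : ∀ t, 0 < F t) (hmul : ∀ s t, F (s + t) = F s * F t) (t : ℝ) :
    F t = exp (log (F 1) * t) := by
  have hlog : log ∘ F = fun t => t * log (F 1) := funext <|
    Real.eq_mul_of_continuous_of_map_add (hc.log fun t => (hpos t).ne') fun s t => by
      simp only [Function.comp, hmul, log_mul (hpos s).ne' (hpos t).ne']
  rw [← exp_log (hpos t), mul_comm]
  exact congrArg exp (congrFun hlog t)

theorem map_mul_of_sub_eq {φ : ℝ → ℝ} {g : ℝ → ℝ → ℝ}
    (hg : ∀ x y ζ : ℝ, 0 < x → 0 < y → 0 < ζ → φ (ζ * x) - φ (ζ * y) = g x y)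
    {x y : ℝ} (hx : 0 < x) (hy : 0 < y) : φ (x * y) = φ x + φ y - φ 1 := by
  have hζ := hg y 1 x hy one_pos hx
  have hone := hg y 1 1 hy one_pos one_pos
  rw [mul_one, one_mul] at hone
  rw [mul_one] at hζ
  linarith

theorem mul_deriv_eq_of_eq_mul_log_add {φ : ℝ → ℝ} {a b y : ℝ} (hy : 0 < y)
    (hφ : ∀ z, 0 < z → φ z = a * log z + b) : y * deriv φ y = a := by
  have hev : φ =ᶠ[nhds y] fun z => a * log z + b :=
    Filter.eventually_of_mem (Ioi_mem_nhds hy) hφ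
  rw [hev.deriv_eq, (((hasDerivAt_log hy.ne').const_mul a).add_const b).deriv]
  field_simp

theorem stmt_16_general (f finv : ℝ → ℝ) (hpos : ∀ x, 0 < f x)
    (hdiff : Differentiable ℝ f)
    (hleft : ∀ x, finv (f x) = x)
    (hright : ∀ y : ℝ, 0 < y → f (finv y) = y)
    (g : ℝ → ℝ → ℝ)
    (hg : ∀ x y ζ : ℝ, 0 < x → 0 < y → 0 < ζ →
      finv (ζ * x) - finv (ζ * y) = g x y) :
    (∃ K : ℝ, ∀ y : ℝ, 0 < y → y * deriv finv y = K) ∧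
    (∃ c c' : ℝ, c ≠ 0 ∧ ∀ x, f x = Real.exp (c * x + c')) := by
  set c := finv 1
  have hshift : ∀ u v, f (u + v - c) = f u * f v := fun u v => by
    have := map_mul_of_sub_eq hg (hpos u) (hpos v)
    rw [hleft, hleft] at this
    rw [← this, hright _ (mul_pos (hpos u) (hpos v))]
  set k := log (f (1 + c))
  have hf : ∀ x, f x = exp (k * x + -k * c) := fun x => by
    have := Real.eq_exp_mul_of_continuous_of_map_add (F := fun t => f (t + c))
      (hdiff.continuous.comp (continuous_add_const c)) (fun t => hpos (t + c))
      (fun s t => by rw [← hshift]; ring_nf) (x - c)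
    rw [sub_add_cancel] at this
    rw [this, mul_sub, sub_eq_add_neg, neg_mul]
  have hk : k ≠ 0 := fun hk => by
    have h2 := hright 2 two_pos
    rw [hf, hk] at h2
    norm_num at h2
  have hfinv : ∀ y, 0 < y → finv y = k⁻¹ * log y + c := fun y hy => by
    have := congrArg log (hright y hy)
    rw [hf, log_exp] at this
    field_simp
    linarith
  exact ⟨⟨k⁻¹, fun y hy => mul_deriv_eq_of_eq_mul_log_add hy hfinv⟩, ⟨k, -k * c, hk, hf⟩⟩

theorem stmt_16 (f finv : ℝ → ℝ) (hpos : ∀ x, 0 < f x)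
    (hdiff : Differentiable ℝ f)
    (hinj : Function.Injective f)
    (hsurj : ∀ y : ℝ, 0 < y → ∃ x, f x = y)
    (hleft : ∀ x, finv (f x) = x)
    (hright : ∀ y : ℝ, 0 < y → f (finv y) = y)
    (g : ℝ → ℝ → ℝ)
    (hg : ∀ x y ζ : ℝ, 0 < x → 0 < y → 0 < ζ →
      finv (ζ * x) - finv (ζ * y) = g x y) :
    (∃ K : ℝ, ∀ y : ℝ, 0 < y → y * deriv finv y = K) ∧
    (∃ c c' : ℝ, c ≠ 0 ∧ ∀ x, f x = Real.exp (c * x + c')) :=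
  stmt_16_general f finv hpos hdiff hleft hright g hg
end

section
/- The maps F_H : (p, t_∞) ↦ (E, β^{-1}) and F_t : (E, β^{-1}) ↦ (p, t_∞) defined by β^{-1} = (t_∞ ‖p‖)^{-1} (∑_k [(1/n)∑_j log(p_j/p_k)]² + 1)^{-1/2}, E_k = β^{-1}·(1/n)∑_j log(p_j/p_k), and p_k = e^{−βE_k}/∑_j e^{−βE_j}, t_∞ = ‖p‖^{-1}(‖E‖² + β^{-2})^{-1/2}, are mutually inverse bijections between {(p,t_∞) : p strictly positive probability vector on [n], t_∞ > 0} and {(E,β^{-1}) : ∑_j E_j = 0, β > 0}. -/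
/-- Statistical descriptions: strictly positive probability vectors together
with a positive timescale. -/
def statSet (n : ℕ) : Set ((Fin n → ℝ) × ℝ) :=
  {x | (∀ j, 0 < x.1 j) ∧ (∑ j, x.1 j = 1) ∧ 0 < x.2}

/-- Physical descriptions: zero-mean energy vectors together with a positive
(inverse) temperature `β⁻¹`. -/
def physSet (n : ℕ) : Set ((Fin n → ℝ) × ℝ) :=
  {y | (∑ j, y.1 j = 0) ∧ 0 < y.2}

/-- `F_H : (p, t_∞) ↦ (E, β⁻¹)`. -/
noncomputable def FH (n : ℕ) (x : (Fin n → ℝ) × ℝ) : (Fin n → ℝ) × ℝ :=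
  let p := x.1
  let tInf := x.2
  let βinv := (tInf * Real.sqrt (∑ k, p k ^ 2))⁻¹ *
    (Real.sqrt ((∑ k, ((1 / (n : ℝ)) * ∑ j, Real.log (p j / p k)) ^ 2) + 1))⁻¹
  (fun k => βinv * ((1 / (n : ℝ)) * ∑ j, Real.log (p j / p k)), βinv)

/-- `F_t : (E, β⁻¹) ↦ (p, t_∞)`. -/
noncomputable def Ft (n : ℕ) (y : (Fin n → ℝ) × ℝ) : (Fin n → ℝ) × ℝ :=
  let E := y.1
  let βinv := y.2
  let p : Fin n → ℝ := fun k =>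
    Real.exp (-(βinv⁻¹ * E k)) / ∑ j, Real.exp (-(βinv⁻¹ * E j))
  (p, (Real.sqrt (∑ k, p k ^ 2))⁻¹ *
    (Real.sqrt ((∑ k, E k ^ 2) + βinv ^ 2))⁻¹)

/-!
With `γ = β E`, the energy part of `F_H` is the centred negative log-probability
`γ_k = mean_j log p_j - log p_k`, and the first component of `F_t` is the Gibbs distribution
`p_k = e^{-γ_k} / Z`. Centring kills the `log Z` term, so `γ ↦ p ↦ γ` is the identity on zero-sum
vectors, and the Gibbs distribution is unchanged by adding a constant to `γ`, so `p ↦ γ ↦ p` is the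
identity on probability vectors. For the scalars, `‖E‖² + β⁻² = β⁻² (‖γ‖² + 1)`, so `t_∞ ‖p‖` and
`β⁻¹ √(‖γ‖² + 1)` are reciprocal in both directions.
-/

open Real

section Gibbs

variable {ι : Type*} [Fintype ι]

noncomputable def gibbs (γ : ι → ℝ) (k : ι) : ℝ :=
  exp (-γ k) / ∑ j, exp (-γ j)

lemma gibbs_add_const (γ : ι → ℝ) (c : ℝ) : gibbs (fun k => γ k + c) = gibbs γ := by
  have hexp : ∀ k, exp (-(γ k + c)) = exp (-γ k) * exp (-c) := fun k => by
    rw [← exp_add]; ring_nf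
  funext k
  simp only [gibbs, hexp, ← Finset.sum_mul]
  exact mul_div_mul_right _ _ (exp_pos _).ne'

lemma gibbs_neg_log {p : ι → ℝ} (hp : ∀ k, 0 < p k) (hsum : ∑ k, p k = 1) :
    gibbs (fun k => -log (p k)) = p := by
  funext k
  simp only [gibbs, neg_neg, exp_log (hp _), hsum, div_one]

variable [Nonempty ι]

lemma sum_exp_neg_pos (γ : ι → ℝ) : 0 < ∑ j, exp (-γ j) :=
  Finset.sum_pos (fun _ _ => exp_pos _) Finset.univ_nonempty

lemma gibbs_pos (γ : ι → ℝ) (k : ι) : 0 < gibbs γ k :=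
  div_pos (exp_pos _) (sum_exp_neg_pos γ)

lemma sum_gibbs (γ : ι → ℝ) : ∑ k, gibbs γ k = 1 := by
  simp only [gibbs, ← Finset.sum_div]
  exact div_self (sum_exp_neg_pos γ).ne'

lemma log_gibbs (γ : ι → ℝ) (k : ι) : log (gibbs γ k) = -γ k - log (∑ j, exp (-γ j)) := by
  rw [gibbs, log_div (exp_pos _).ne' (sum_exp_neg_pos γ).ne', log_exp]

end Gibbs

lemma sqrt_sum_mul_sq_add_sq {ι : Type*} [Fintype ι] (x : ι → ℝ) {c : ℝ} (hc : 0 ≤ c) :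
    √(∑ k, (c * x k) ^ 2 + c ^ 2) = c * √(∑ k, x k ^ 2 + 1) := by
  have hfactor : ∑ k, (c * x k) ^ 2 + c ^ 2 = c ^ 2 * (∑ k, x k ^ 2 + 1) := by
    simp only [mul_pow, ← Finset.mul_sum]; ring
  rw [hfactor, sqrt_mul (sq_nonneg c), sqrt_sq hc]

lemma sqrt_sum_sq_pos {ι : Type*} [Fintype ι] [Nonempty ι] {p : ι → ℝ} (hp : ∀ k, 0 < p k) :
    0 < √(∑ k, p k ^ 2) :=
  sqrt_pos.mpr (Finset.sum_pos (fun k _ => pow_pos (hp k) 2) Finset.univ_nonempty)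

noncomputable def centeredNegLog (n : ℕ) (p : Fin n → ℝ) (k : Fin n) : ℝ :=
  (1 / (n : ℝ)) * ∑ j, log (p j / p k)

section CenteredNegLog

variable {n : ℕ} [NeZero n]

lemma centeredNegLog_eq {p : Fin n → ℝ} (hp : ∀ k, 0 < p k) (k : Fin n) :
    centeredNegLog n p k = -log (p k) + (1 / (n : ℝ)) * ∑ j, log (p j) := by
  have hn : (n : ℝ) ≠ 0 := Nat.cast_ne_zero.mpr (NeZero.ne n)
  simp only [centeredNegLog, log_div (hp _).ne' (hp k).ne', Finset.sum_sub_distrib,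
    Finset.sum_const, Finset.card_univ, Fintype.card_fin, nsmul_eq_mul]
  field_simp
  ring

lemma sum_centeredNegLog {p : Fin n → ℝ} (hp : ∀ k, 0 < p k) :
    ∑ k, centeredNegLog n p k = 0 := by
  have hn : (n : ℝ) ≠ 0 := Nat.cast_ne_zero.mpr (NeZero.ne n)
  simp only [centeredNegLog_eq hp, Finset.sum_add_distrib, Finset.sum_neg_distrib,
    Finset.sum_const, Finset.card_univ, Fintype.card_fin, nsmul_eq_mul]
  field_simp
  ring

lemma gibbs_centeredNegLog {p : Fin n → ℝ} (hp : ∀ k, 0 < p k) (hsum : ∑ k, p k = 1) :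
    gibbs (centeredNegLog n p) = p := by
  simp only [funext (centeredNegLog_eq hp), gibbs_add_const, gibbs_neg_log hp hsum]

lemma centeredNegLog_gibbs {γ : Fin n → ℝ} (hγ : ∑ k, γ k = 0) :
    centeredNegLog n (gibbs γ) = γ := by
  funext k
  simp only [centeredNegLog_eq (gibbs_pos γ), log_gibbs, Finset.sum_sub_distrib,
    Finset.sum_neg_distrib, hγ, Finset.sum_const, Finset.card_univ, Fintype.card_fin,
    nsmul_eq_mul]
  have hn : (n : ℝ) ≠ 0 := Nat.cast_ne_zero.mpr (NeZero.ne n)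
  field_simp
  ring

end CenteredNegLog

noncomputable def temperature (n : ℕ) (p : Fin n → ℝ) (t : ℝ) : ℝ :=
  (t * √(∑ k, p k ^ 2))⁻¹ * (√(∑ k, centeredNegLog n p k ^ 2 + 1))⁻¹

noncomputable def timescale {n : ℕ} (E : Fin n → ℝ) (v : ℝ) : ℝ :=
  (√(∑ k, gibbs (fun j => v⁻¹ * E j) k ^ 2))⁻¹ * (√(∑ k, E k ^ 2 + v ^ 2))⁻¹

lemma FH_apply (n : ℕ) (p : Fin n → ℝ) (t : ℝ) :
    FH n (p, t) = (fun k => temperature n p t * centeredNegLog n p k, temperature n p t) :=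
  rfl

lemma Ft_apply (n : ℕ) (E : Fin n → ℝ) (v : ℝ) :
    Ft n (E, v) = (gibbs (fun k => v⁻¹ * E k), timescale E v) :=
  rfl

section Maps

variable {n : ℕ} [NeZero n]

lemma temperature_pos {p : Fin n → ℝ} (hp : ∀ k, 0 < p k) {t : ℝ} (ht : 0 < t) :
    0 < temperature n p t := by
  have := sqrt_sum_sq_pos hp
  unfold temperature; positivity

lemma FH_mapsTo : Set.MapsTo (FH n) (statSet n) (physSet n) := by
  rintro ⟨p, t⟩ ⟨hp, -, ht⟩
  rw [FH_apply]
  exact ⟨by rw [← Finset.mul_sum, sum_centeredNegLog hp, mul_zero], temperature_pos hp ht⟩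

lemma Ft_mapsTo : Set.MapsTo (Ft n) (physSet n) (statSet n) := by
  rintro ⟨E, v⟩ ⟨-, hv⟩
  have := sqrt_sum_sq_pos (gibbs_pos fun j => v⁻¹ * E j)
  rw [Ft_apply]
  exact ⟨gibbs_pos _, sum_gibbs _, by unfold timescale; positivity⟩

lemma Ft_FH {x : (Fin n → ℝ) × ℝ} (hx : x ∈ statSet n) : Ft n (FH n x) = x := by
  obtain ⟨p, t⟩ := x
  obtain ⟨hp, hsum, ht⟩ := hx
  have hT := temperature_pos hp ht
  have hgibbs : gibbs (fun k => (temperature n p t)⁻¹ * (temperature n p t * centeredNegLog n p k))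
      = p := by
    simp only [inv_mul_cancel_left₀ hT.ne', gibbs_centeredNegLog hp hsum]
  rw [FH_apply, Ft_apply, timescale, hgibbs, sqrt_sum_mul_sq_add_sq _ hT.le]
  have := sqrt_sum_sq_pos hp
  congr 1
  unfold temperature
  field_simp

lemma FH_Ft {y : (Fin n → ℝ) × ℝ} (hy : y ∈ physSet n) : FH n (Ft n y) = y := by
  obtain ⟨E, v⟩ := y
  obtain ⟨hE, hv⟩ := hy
  have hγ : ∑ k, v⁻¹ * E k = 0 := by rw [← Finset.mul_sum, hE, mul_zero]
  have hnorm : √(∑ k, E k ^ 2 + v ^ 2) = v * √(∑ k, (v⁻¹ * E k) ^ 2 + 1) := by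
    simp only [← sqrt_sum_mul_sq_add_sq _ hv.le, mul_inv_cancel_left₀ hv.ne']
  have hT : temperature n (gibbs fun k => v⁻¹ * E k) (timescale E v) = v := by
    have hP := sqrt_sum_sq_pos (gibbs_pos fun j => v⁻¹ * E j)
    rw [temperature, timescale, centeredNegLog_gibbs hγ, hnorm]
    generalize √(∑ k, gibbs (fun j => v⁻¹ * E j) k ^ 2) = P at hP ⊢
    field_simp
  rw [Ft_apply, FH_apply, hT, centeredNegLog_gibbs hγ]
  simp only [mul_inv_cancel_left₀ hv.ne']

end Maps

theorem stmt_19 (n : ℕ) (hn : 1 ≤ n) :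
    Set.BijOn (FH n) (statSet n) (physSet n) ∧
    Set.BijOn (Ft n) (physSet n) (statSet n) ∧
    (∀ x ∈ statSet n, Ft n (FH n x) = x) ∧
    (∀ y ∈ physSet n, FH n (Ft n y) = y) := by
  have : NeZero n := ⟨by omega⟩
  have hinv : Set.InvOn (Ft n) (FH n) (statSet n) (physSet n) :=
    ⟨fun _ hx => Ft_FH hx, fun _ hy => FH_Ft hy⟩
  exact ⟨hinv.bijOn FH_mapsTo Ft_mapsTo, hinv.symm.bijOn Ft_mapsTo FH_mapsTo, hinv.1, hinv.2⟩
end
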